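/- McCarty realizability validates the union axiom: there is a natural number e such that for all trees a in the realizability universe, e realizes ∃x ∀y (y ε x ↔ ∃z ε a, y ε z). -/

import Mathlib

/-!
The witness is the union tree `⋃a`, with an edge `(⟨m, k⟩, u)` for every `(m, v) ∈ E(a)` and
`(k, u) ∈ E(v)`. A realizer of `y ε ⋃a` thus names such an edge together with `y = u`, from
which `v ε a` (via a uniform realizer of `v = v`) and `y ε v` are read off. Conversely, given
`z ε a` through `(m, v)` with `z = v`, and `y ε z` through `(k, u)` with `y = u`, the realizer
of `z = v` sends `u ε z` to some edge `(k', u')` of `v` with `u = u'`; so `y ε ⋃a` through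
`⟨m, k'⟩`, once `y = u` and `u = u'` are composed. Both the uniform reflexivity realizer and the
composition realizer for transitivity come from Kleene's recursion theorem; transitivity is
proved by `ε`-induction on a statement symmetric in the two ends.
-/

/-- Kleene application: evaluate the partial recursive function with code `n` at `m`. -/
def kapp (n m : ℕ) : Part ℕ := (Denumerable.ofNat Nat.Partrec.Code n).eval m

/-- McCarty's realizability universe: well-founded trees `sup(S)` where `S` is a
set of pairs `(m, v)` with `m ∈ ℕ` and `v` a tree (presented by an indexed family). -/
inductive V : Type 1
  | sup : (I : Type) → (I → ℕ × V) → V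

/-- The set of labelled edges into (the root of) a tree. -/
def V.E : V → Set (ℕ × V)
  | V.sup _ t => Set.range t

mutual
  /-- `RMem n x w`: `n ⊩ x ε w`, i.e. there is `(m, v) ∈ E(w)` with `n₀ = m` and
  `n₁ ⊩ x = v`. -/
  inductive RMem : ℕ → V → V → Prop
    | intro (n : ℕ) (x w v : V) (h : (n.unpair.1, v) ∈ w.E)
        (h2 : REq n.unpair.2 x v) : RMem n x w
  /-- `REq n w w'`: `n ⊩ w = w'`, i.e. for all `(m, v) ∈ E(w)`, `n₀(m)` is defined and
  `n₀(m) ⊩ v ε w'`, and for all `(m', v') ∈ E(w')`, `n₁(m')` is defined and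
  `n₁(m') ⊩ v' ε w`. -/
  inductive REq : ℕ → V → V → Prop
    | intro (n : ℕ) (w w' : V)
        (d1 : ∀ m v, (m, v) ∈ w.E → (kapp n.unpair.1 m).Dom)
        (h1 : ∀ m v (h : (m, v) ∈ w.E),
          RMem ((kapp n.unpair.1 m).get (d1 m v h)) v w')
        (d2 : ∀ m' v', (m', v') ∈ w'.E → (kapp n.unpair.2 m').Dom)
        (h2 : ∀ m' v' (h : (m', v') ∈ w'.E),
          RMem ((kapp n.unpair.2 m').get (d2 m' v' h)) v' w) :
        REq n w w'
end

/-- Kleene realizability of an implication between two abstractly realized statements: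
`n ⊩ φ → ψ` iff for every `m ⊩ φ`, `n(m)` is defined and `n(m) ⊩ ψ`. -/
def RImp (P Q : ℕ → Prop) (n : ℕ) : Prop :=
  ∀ m, P m → ∃ k, k ∈ kapp n m ∧ Q k

open Nat.Partrec (Code)
open Encodable

theorem kapp_encode (c : Code) : kapp (encode c) = c.eval := by
  funext m; simp [kapp]

theorem kapp_partrec : Partrec₂ kapp :=
  Code.eval_part.comp ((Computable.ofNat _).comp Computable.fst) Computable.snd

theorem Computable.natPair : Computable₂ Nat.pair :=
  Primrec₂.natPair.to_comp

theorem Computable.unpair_fst : Computable fun n : ℕ => n.unpair.1 :=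
  Computable.fst.comp Computable.unpair

theorem Computable.unpair_snd : Computable fun n : ℕ => n.unpair.2 :=
  Computable.snd.comp Computable.unpair

theorem exists_kapp_eq {f : ℕ →. ℕ} (hf : Partrec f) : ∃ e, kapp e = f := by
  obtain ⟨c, hc⟩ := Code.exists_code.1 (Partrec.nat_iff.1 hf)
  exact ⟨encode c, by rw [kapp_encode, hc]⟩

/-- Kleene's recursion theorem with a parameter: a computable family of indices `c n` whose
behaviour may refer to an index `e` of the family itself. -/
theorem exists_kapp_family {f : ℕ → ℕ → ℕ →. ℕ}
    (hf : Partrec fun x : ℕ × ℕ × ℕ => f x.1 x.2.1 x.2.2) :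
    ∃ (e : ℕ) (c : ℕ → ℕ), Computable c ∧ (∀ n, kapp e n = Part.some (c n)) ∧
      ∀ n, kapp (c n) = f e n := by
  obtain ⟨cf, hcf⟩ := exists_kapp_eq (hf.comp
    ((Computable.unpair_fst.comp Computable.unpair_fst).pair
      ((Computable.unpair_snd.comp Computable.unpair_fst).pair Computable.unpair_snd)))
  let c (e n : ℕ) : ℕ := encode ((Denumerable.ofNat Code cf).curry (Nat.pair e n))
  have hc : Computable₂ c :=
    (Primrec.encode.comp (Code.primrec₂_curry.comp (Primrec.const _) Primrec₂.natPair)).to_comp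
  obtain ⟨d, hd⟩ := Code.fixed_point₂ (f := fun d n => Part.some (c (encode d) n))
    (hc.comp (Computable.encode.comp Computable.fst) Computable.snd).partrec
  refine ⟨encode d, c (encode d), hc.comp (Computable.const _) Computable.id,
    fun n => by rw [kapp_encode, hd], fun n => funext fun m => ?_⟩
  simp only [c, kapp_encode, Code.eval_curry]
  rw [← kapp, hcf]
  simp

def V.Idx : V → Type
  | V.sup I _ => I

def V.edge : (v : V) → v.Idx → ℕ × V
  | V.sup _ t => t

theorem V.E_eq_range_edge (v : V) : v.E = Set.range v.edge := by
  cases v; rfl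

theorem V.edge_induction {motive : V → Prop}
    (step : ∀ v, (∀ m u, (m, u) ∈ v.E → motive u) → motive v) (v : V) : motive v :=
  V.rec (motive_1 := motive) (motive_2 := fun p => motive p.2)
    (fun _ t ih => step _ fun m u ⟨i, hi⟩ => by simpa [hi] using ih i) (fun _ _ hv => hv) v

def V.union (a : V) : V :=
  V.sup (Σ i : a.Idx, (a.edge i).2.Idx) fun ij =>
    (Nat.pair (a.edge ij.1).1 ((a.edge ij.1).2.edge ij.2).1, ((a.edge ij.1).2.edge ij.2).2)

theorem V.mem_E_union {a u : V} {n : ℕ} :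
    (n, u) ∈ a.union.E ↔ ∃ m v k, (m, v) ∈ a.E ∧ (k, u) ∈ v.E ∧ n = Nat.pair m k := by
  simp only [V.E_eq_range_edge a]
  constructor
  · rintro ⟨⟨i, j⟩, hij⟩
    obtain ⟨rfl, rfl⟩ := Prod.ext_iff.1 hij
    exact ⟨_, _, _, ⟨i, rfl⟩, by rw [V.E_eq_range_edge]; exact ⟨j, rfl⟩, rfl⟩
  · rintro ⟨m, v, k, ⟨i, hi⟩, hku, rfl⟩
    obtain ⟨j, hj⟩ : (k, u) ∈ Set.range (a.edge i).2.edge := by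
      rw [hi, ← V.E_eq_range_edge]; exact hku
    exact ⟨⟨i, j⟩, by simp only [hi, hj]⟩

theorem rmem_iff {n : ℕ} {x w : V} :
    RMem n x w ↔ ∃ v, (n.unpair.1, v) ∈ w.E ∧ REq n.unpair.2 x v :=
  ⟨fun ⟨_, _, _, v, h, h2⟩ => ⟨v, h, h2⟩, fun ⟨v, h, h2⟩ => RMem.intro n x w v h h2⟩

theorem RMem.pair {m r : ℕ} {x w v : V} (h : (m, v) ∈ w.E) (hr : REq r x v) :
    RMem (Nat.pair m r) x w :=
  rmem_iff.2 ⟨v, by simpa using h, by simpa using hr⟩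

/-- `e ⊩ x ⊆ y`, one half of the clause for `⊩ x = y`. -/
def RSub (e : ℕ) (x y : V) : Prop :=
  ∀ m u, (m, u) ∈ x.E → ∃ r ∈ kapp e m, RMem r u y

theorem req_iff {n : ℕ} {x y : V} :
    REq n x y ↔ RSub n.unpair.1 x y ∧ RSub n.unpair.2 y x := by
  constructor
  · rintro ⟨_, _, _, d1, h1, d2, h2⟩
    exact ⟨fun m u hu => ⟨_, Part.get_mem (d1 m u hu), h1 m u hu⟩,
      fun m u hu => ⟨_, Part.get_mem (d2 m u hu), h2 m u hu⟩⟩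
  · rintro ⟨H1, H2⟩
    choose f hf hf2 using H1
    choose g hg hg2 using H2
    refine REq.intro n x y (fun m u h => Part.dom_iff_mem.2 ⟨_, hf m u h⟩) (fun m u h => ?_)
      (fun m u h => Part.dom_iff_mem.2 ⟨_, hg m u h⟩) (fun m u h => ?_)
    · rw [Part.get_eq_of_mem (hf m u h)]; exact hf2 m u h
    · rw [Part.get_eq_of_mem (hg m u h)]; exact hg2 m u h

open Computable in
theorem exists_req_refl : ∃ ρ, ∀ v, REq ρ v v := by
  obtain ⟨e, c, -, he, hc⟩ := exists_kapp_family
    (f := fun e _ m => (kapp e 0).map fun k => Nat.pair m (Nat.pair k k))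
    ((kapp_partrec.comp fst (const 0)).map
      (natPair.comp (snd.comp (snd.comp fst)) (natPair.comp snd snd)))
  refine ⟨Nat.pair (c 0) (c 0), V.edge_induction fun v ih => ?_⟩
  have hsub : RSub (c 0) v v := by
    intro m u hu
    exact ⟨_, by simp [hc, he], RMem.pair hu (ih m u hu)⟩
  rw [req_iff, Nat.unpair_pair]
  exact ⟨hsub, hsub⟩

/-- The realizer of `x ⊆ z` obtained by chaining one of `x ⊆ y` and one of `y ⊆ z`, where `t`
produces a realizer of `u = u''` from realizers of `u = u'` and `u' = u''`. -/
def kcomp (t : ℕ → ℕ → ℕ) (e e' m : ℕ) : Part ℕ :=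
  (kapp e m).bind fun r => (kapp e' r.unpair.1).map fun s =>
    Nat.pair s.unpair.1 (t r.unpair.2 s.unpair.2)

theorem RSub.trans {t : ℕ → ℕ → ℕ} {d e e' : ℕ} {x y z : V} (hd : kapp d = kcomp t e e')
    (ht : ∀ m u, (m, u) ∈ x.E → ∀ m'' u'', (m'', u'') ∈ z.E →
      ∀ u' p q, REq p u u' → REq q u' u'' → REq (t p q) u u'')
    (h : RSub e x y) (h' : RSub e' y z) : RSub d x z := by
  intro m u hu
  obtain ⟨r, hr, hru⟩ := h m u hu
  obtain ⟨u', hu', hp⟩ := rmem_iff.1 hru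
  obtain ⟨s, hs, hsu⟩ := h' _ _ hu'
  obtain ⟨u'', hu'', hq⟩ := rmem_iff.1 hsu
  refine ⟨_, ?_, RMem.pair hu'' (ht m u hu _ u'' hu'' u' _ _ hp hq)⟩
  rw [hd, kcomp]
  exact Part.mem_bind_iff.2 ⟨r, hr, Part.mem_map _ hs⟩

theorem REq.trans_of_kcomp {t : ℕ → ℕ → ℕ}
    (ht : ∀ p q, kapp (t p q).unpair.1 = kcomp t p.unpair.1 q.unpair.1 ∧
      kapp (t p q).unpair.2 = kcomp t q.unpair.2 p.unpair.2)
    {p q : ℕ} {x y z : V} (hp : REq p x y) (hq : REq q y z) : REq (t p q) x z := by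
  -- the children needed on the right-hand halves are those of `z`, hence the symmetric statement
  suffices H : ∀ x y z p q, (REq p x y → REq q y z → REq (t p q) x z) ∧
      (REq p z y → REq q y x → REq (t p q) z x) from (H x y z p q).1 hp hq
  intro x
  induction x using V.edge_induction with
  | step x ih =>
  refine fun y z p q => ⟨fun hp hq => ?_, fun hp hq => ?_⟩ <;>
    rw [req_iff] at hp hq ⊢
  · exact ⟨hp.1.trans (ht p q).1 (fun m u hu _ _ _ _ _ _ => (ih m u hu _ _ _ _).1) hq.1,
      hq.2.trans (ht p q).2 (fun _ _ _ m u hu _ _ _ => (ih m u hu _ _ _ _).2) hp.2⟩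
  · exact ⟨hp.1.trans (ht p q).1 (fun _ _ _ m u hu _ _ _ => (ih m u hu _ _ _ _).2) hq.1,
      hq.2.trans (ht p q).2 (fun m u hu _ _ _ _ _ _ => (ih m u hu _ _ _ _).1) hp.2⟩

open Computable in
theorem exists_trans_realizer : ∃ t : ℕ → ℕ → ℕ, Computable₂ t ∧
    ∀ p q, kapp (t p q).unpair.1 = kcomp t p.unpair.1 q.unpair.1 ∧
      kapp (t p q).unpair.2 = kcomp t q.unpair.2 p.unpair.2 := by
  -- `c ⟨e, e'⟩` is to be `kcomp t e e'`, its recursive calls `t r s` going through `e₀`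
  obtain ⟨e₀, c, hc, he₀, hce⟩ := exists_kapp_family
    (f := fun e₀ n m =>
      (kapp n.unpair.1 m).bind fun r => (kapp n.unpair.2 r.unpair.1).bind fun s =>
      (kapp e₀ (Nat.pair r.unpair.2.unpair.1 s.unpair.2.unpair.1)).bind fun a =>
      (kapp e₀ (Nat.pair s.unpair.2.unpair.2 r.unpair.2.unpair.2)).map fun b =>
        Nat.pair s.unpair.1 (Nat.pair a b))
    (by
      refine (kapp_partrec.comp (unpair_fst.comp (fst.comp snd)) (snd.comp snd)).bind ?_
      refine (kapp_partrec.comp (unpair_snd.comp (fst.comp (snd.comp fst)))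
        (unpair_fst.comp snd)).bind ?_
      refine (kapp_partrec.comp (fst.comp (fst.comp fst))
        (natPair.comp (unpair_fst.comp (unpair_snd.comp (snd.comp fst)))
          (unpair_fst.comp (unpair_snd.comp snd)))).bind ?_
      refine (kapp_partrec.comp (fst.comp (fst.comp (fst.comp fst)))
        (natPair.comp (unpair_snd.comp (unpair_snd.comp (snd.comp fst)))
          (unpair_snd.comp (unpair_snd.comp (snd.comp (fst.comp fst)))))).map ?_
      exact natPair.comp (unpair_fst.comp (snd.comp (fst.comp fst)))
        (natPair.comp (snd.comp fst) snd))
  refine ⟨fun p q => Nat.pair (c (Nat.pair p.unpair.1 q.unpair.1))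
    (c (Nat.pair q.unpair.2 p.unpair.2)), ?_, fun p q => ?_⟩
  · exact natPair.comp (hc.comp (natPair.comp (unpair_fst.comp fst) (unpair_fst.comp snd)))
      (hc.comp (natPair.comp (unpair_snd.comp snd) (unpair_snd.comp fst)))
  · simp only [Nat.unpair_pair, hce, he₀, Part.map_some, Part.bind_some_eq_map]
    exact ⟨rfl, rfl⟩

open Computable in
theorem exists_realizer_union_subset {ρ : ℕ} (hρ : ∀ v, REq ρ v v) :
    ∃ e, ∀ a y : V, RImp (fun m => RMem m y a.union)
      (fun k => ∃ z : V, RMem k.unpair.1 z a ∧ RMem k.unpair.2 y z) e := by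
  obtain ⟨e, he⟩ := exists_kapp_eq (f := fun m => Part.some
      (Nat.pair (Nat.pair m.unpair.1.unpair.1 ρ) (Nat.pair m.unpair.1.unpair.2 m.unpair.2)))
    (natPair.comp (natPair.comp (unpair_fst.comp unpair_fst) (const ρ))
      (natPair.comp (unpair_snd.comp unpair_fst) unpair_snd)).partrec
  refine ⟨e, fun a y m hm => ?_⟩
  obtain ⟨u, hu, hyu⟩ := rmem_iff.1 hm
  obtain ⟨i, v, j, hv, hu', hm₁⟩ := V.mem_E_union.1 hu
  refine ⟨_, by rw [he]; exact Part.mem_some _, v, ?_, ?_⟩ <;>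
    simp only [Nat.unpair_pair, hm₁]
  · exact RMem.pair hv (hρ v)
  · exact RMem.pair hu' hyu

open Computable in
theorem exists_realizer_subset_union {t : ℕ → ℕ → ℕ} (ht : Computable₂ t)
    (htrans : ∀ {p q : ℕ} {x y z : V}, REq p x y → REq q y z → REq (t p q) x z) :
    ∃ e, ∀ a y : V, RImp (fun k => ∃ z : V, RMem k.unpair.1 z a ∧ RMem k.unpair.2 y z)
      (fun m => RMem m y a.union) e := by
  obtain ⟨e, he⟩ := exists_kapp_eq
    (f := fun k => (kapp k.unpair.1.unpair.2.unpair.1 k.unpair.2.unpair.1).map fun r =>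
      Nat.pair (Nat.pair k.unpair.1.unpair.1 r.unpair.1) (t k.unpair.2.unpair.2 r.unpair.2))
    ((kapp_partrec.comp (unpair_fst.comp (unpair_snd.comp unpair_fst))
        (unpair_fst.comp unpair_snd)).map
      (natPair.comp (natPair.comp (unpair_fst.comp (unpair_fst.comp fst)) (unpair_fst.comp snd))
        (ht.comp (unpair_snd.comp (unpair_snd.comp fst)) (unpair_snd.comp snd))))
  refine ⟨e, fun a y k ⟨z, hz, hy⟩ => ?_⟩
  obtain ⟨v, hv, hzv⟩ := rmem_iff.1 hz
  obtain ⟨u, hu, hyu⟩ := rmem_iff.1 hy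
  obtain ⟨r, hr, hru⟩ := (req_iff.1 hzv).1 _ _ hu
  obtain ⟨u', hu', huu'⟩ := rmem_iff.1 hru
  exact ⟨_, by rw [he]; exact Part.mem_map _ hr,
    RMem.pair (V.mem_E_union.2 ⟨_, _, _, hv, hu', rfl⟩) (htrans hyu huu')⟩

/-- McCarty realizability validates the union axiom: there is `e` such that for all
trees `a`, `e` realizes `∃x ∀y (y ε x ↔ ∃z ε a, y ε z)` (uniform quantifiers; a
realizer of `∃z ε a, y ε z` is a pair of a realizer of `z ε a` and one of `y ε z`). -/
theorem union_realized :
    ∃ e : ℕ, ∀ a : V, ∃ x : V, ∀ y : V,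
      RImp (fun m => RMem m y x)
        (fun k => ∃ z : V, RMem k.unpair.1 z a ∧ RMem k.unpair.2 y z) e.unpair.1 ∧
      RImp (fun k => ∃ z : V, RMem k.unpair.1 z a ∧ RMem k.unpair.2 y z)
        (fun m => RMem m y x) e.unpair.2 := by
  obtain ⟨ρ, hρ⟩ := exists_req_refl
  obtain ⟨t, ht, hkcomp⟩ := exists_trans_realizer
  obtain ⟨e₁, he₁⟩ := exists_realizer_union_subset hρ
  obtain ⟨e₂, he₂⟩ := exists_realizer_subset_union ht (REq.trans_of_kcomp hkcomp)
  refine ⟨Nat.pair e₁ e₂, fun a => ⟨a.union, fun y => ?_⟩⟩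
  rw [Nat.unpair_pair]
  exact ⟨he₁ a y, he₂ a y⟩
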